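/- arXiv:1705.07861 — 2 statements merged into one kernel-verified Lean document; each statement's English description precedes it below -/
import Mathlib

section
/- Let G be a simple graph on a finite vertex set V, let q ∈ [0,1], let r ≥ 1 be an integer, and suppose that for each vertex v ∈ V and each round i ∈ {1, …, r} an independent Bernoulli(q) mark M(v,i) is drawn (product measure over all pairs (v,i)). Say that a vertex u never marks if M(u,i) = 0 for all i. Let P ⊆ V be a set of vertices that are pairwise at graph distance at least 3 from each other (distance between unreachable vertices counting as infinite), and let s ≥ 0 be an integer. Then the probability that every v ∈ P has at least s neighbors that never mark is at most ∏_{v ∈ P} ( C(deg(v), s) · (1−q)^(r·s) ), where deg(v) is the degree of v and C(·,·) is the binomial coefficient. -/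
/-!
Union bound over witnesses. If every `v ∈ P` has `s` never-marking neighbours, then choosing
an `s`-subset of such neighbours for each `v ∈ P` yields a set `T` of never-marking vertices.
There are `∏ C(deg v, s)` such choices, and since vertices of `P` at distance at least `3` have
disjoint neighbourhoods, every choice gives `|T| = s·|P|`, so the `r·|T|` marks on `T` are all
`0` with probability `(1 - q)^(r·s·|P|)`.
-/

open MeasureTheory Finset
open scoped ENNReal NNReal

namespace SimpleGraph

variable {V : Type*} (G : SimpleGraph V)

lemma disjoint_neighborSet_of_two_lt_edist {u v : V} (h : 2 < G.edist u v) :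
    Disjoint (G.neighborSet u) (G.neighborSet v) :=
  Set.disjoint_iff_inter_eq_empty.2 (G.two_lt_edist_iff.1 h).2.2

lemma disjoint_neighborFinset_of_two_lt_edist [LocallyFinite G] {u v : V}
    (h : 2 < G.edist u v) : Disjoint (G.neighborFinset u) (G.neighborFinset v) :=
  Set.disjoint_toFinset.2 (G.disjoint_neighborSet_of_two_lt_edist h)

end SimpleGraph

section SubsetChoices

variable {V : Type*} [Fintype V] [DecidableEq V] {P : Finset V} {N : V → Finset V} {s : ℕ}
  {c : V → Finset V}

def subsetChoices (P : Finset V) (N : V → Finset V) (s : ℕ) : Finset (V → Finset V) :=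
  Fintype.piFinset fun v => if v ∈ P then (N v).powersetCard s else {∅}

lemma mem_subsetChoices :
    c ∈ subsetChoices P N s ↔ (∀ v ∈ P, c v ⊆ N v ∧ #(c v) = s) ∧ ∀ v ∉ P, c v = ∅ := by
  simp only [subsetChoices, Fintype.mem_piFinset]
  refine ⟨fun h => ⟨fun v hv => ?_, fun v hv => ?_⟩, fun ⟨hP, hP'⟩ v => ?_⟩
  · simpa [hv] using h v
  · simpa [hv] using h v
  · by_cases hv : v ∈ P
    · simpa [hv] using hP v hv
    · simpa [hv] using hP' v hv

lemma card_subsetChoices : #(subsetChoices P N s) = ∏ v ∈ P, (#(N v)).choose s := by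
  simp only [subsetChoices, Fintype.card_piFinset, apply_ite card, card_powersetCard,
    card_singleton, prod_ite_mem, univ_inter]

lemma card_biUnion_of_mem_subsetChoices (hN : (P : Set V).PairwiseDisjoint N)
    (hc : c ∈ subsetChoices P N s) : #(P.biUnion c) = #P * s := by
  have hc := (mem_subsetChoices.1 hc).1
  rw [card_biUnion fun u hu v hv huv =>
      (hN hu hv huv).mono (hc u hu).1 (hc v hv).1,
    sum_congr rfl fun v hv => (hc v hv).2, sum_const, smul_eq_mul]

lemma exists_mem_subsetChoices_of_le_card_filter (p : V → Prop) [DecidablePred p]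
    (h : ∀ v ∈ P, s ≤ #((N v).filter p)) :
    ∃ c ∈ subsetChoices P N s, ∀ u ∈ P.biUnion c, p u := by
  have hchoice : ∀ v, ∃ t : Finset V,
      (v ∈ P → t ⊆ (N v).filter p ∧ #t = s) ∧ (v ∉ P → t = ∅) := fun v => by
    by_cases hv : v ∈ P
    · obtain ⟨t, ht, hts⟩ := exists_subset_card_eq (h v hv)
      exact ⟨t, fun _ => ⟨ht, hts⟩, fun h => absurd hv h⟩
    · exact ⟨∅, fun h => absurd h hv, fun _ => rfl⟩
  choose c hcP hcP' using hchoice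
  refine ⟨c, mem_subsetChoices.2 ⟨fun v hv => ?_, hcP'⟩, fun u hu => ?_⟩
  · exact ⟨(hcP v hv).1.trans (filter_subset _ _), (hcP v hv).2⟩
  · obtain ⟨v, hv, huv⟩ := mem_biUnion.1 hu
    exact (mem_filter.1 ((hcP v hv).1 huv)).2

end SubsetChoices

lemma PMF.toMeasure_bernoulli_singleton_false (p : ℝ≥0) (h : p ≤ 1) :
    (PMF.bernoulli p h).toMeasure {false} = 1 - (p : ℝ≥0∞) := by
  rw [PMF.toMeasure_apply_singleton _ _ (measurableSet_singleton _), PMF.bernoulli_apply]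
  simp [ENNReal.coe_sub]

lemma measure_pi_bernoulli_forall_mem_eq_false {ι : Type*} [Fintype ι] (p : ℝ≥0) (h : p ≤ 1)
    (S : Finset ι) :
    Measure.pi (fun _ : ι => (PMF.bernoulli p h).toMeasure) {M | ∀ j ∈ S, M j = false}
      = (1 - (p : ℝ≥0∞)) ^ #S := by
  have hset : {M : ι → Bool | ∀ j ∈ S, M j = false} = (S : Set ι).pi fun _ => {false} := by
    ext M; simp
  rw [hset, Measure.pi_pi_finset, prod_const, PMF.toMeasure_bernoulli_singleton_false]

/-- With independent Bernoulli(q) marks `M(v,i)` for vertices `v` and rounds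
`i ∈ {1,…,r}`, and `P` a set of vertices pairwise at graph distance at least 3, the
probability that every `v ∈ P` has at least `s` neighbors that never mark is at most
`∏_{v ∈ P} C(deg(v), s)·(1−q)^(r·s)`. -/
theorem stmt_6 {V : Type*} [Fintype V] [DecidableEq V] (G : SimpleGraph V)
    [DecidableRel G.Adj] (q : ℝ≥0∞) (hq : q ≤ 1) (r : ℕ)
    (P : Finset V) (hP : ∀ u ∈ P, ∀ v ∈ P, u ≠ v → 3 ≤ G.edist u v) (s : ℕ) :
    Measure.pi (fun _ : V × Fin r => (PMF.bernoulli q.toNNReal (by simpa using ENNReal.toNNReal_mono ENNReal.one_ne_top hq)).toMeasure)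
      {M : V × Fin r → Bool | ∀ v ∈ P,
        s ≤ ((G.neighborFinset v).filter fun u => ∀ i : Fin r, M (u, i) = false).card}
      ≤ ∏ v ∈ P, ((G.degree v).choose s : ℝ≥0∞) * (1 - q) ^ (r * s) := by
  set C := subsetChoices P (fun v => G.neighborFinset v) s
  have hdisj : (P : Set V).PairwiseDisjoint fun v => G.neighborFinset v := fun u hu v hv huv =>
    G.disjoint_neighborFinset_of_two_lt_edist ((by norm_num : (2 : ℕ∞) < 3).trans_le
      (hP u hu v hv huv))
  have hcover : {M : V × Fin r → Bool | ∀ v ∈ P,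
        s ≤ ((G.neighborFinset v).filter fun u => ∀ i : Fin r, M (u, i) = false).card}
      ⊆ ⋃ c ∈ C, {M | ∀ j ∈ P.biUnion c ×ˢ univ, M j = false} := fun M hM => by
    obtain ⟨c, hc, hcM⟩ := exists_mem_subsetChoices_of_le_card_filter _ hM
    exact Set.mem_biUnion hc fun j hj => hcM j.1 (mem_product.1 hj).1 j.2
  calc _ ≤ _ := measure_mono hcover
    _ ≤ _ := measure_biUnion_finset_le _ _
    _ = ∑ c ∈ C, (1 - q) ^ (#P * s * r) := sum_congr rfl fun c hc => by
        refine (measure_pi_bernoulli_forall_mem_eq_false _ _ _).trans ?_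
        rw [card_product, card_univ, Fintype.card_fin,
          card_biUnion_of_mem_subsetChoices hdisj hc,
          ENNReal.coe_toNNReal (ne_top_of_le_ne_top ENNReal.one_ne_top hq)]
    _ = _ := by
        rw [sum_const, nsmul_eq_mul, card_subsetChoices, prod_mul_distrib, prod_const]
        simp only [SimpleGraph.card_neighborFinset_eq_degree, Nat.cast_prod]
        ring
end

section
/- Let G be a finite simple graph and v a vertex of G. Then the product, over all neighbors u of v whose degree satisfies deg(u) ≥ deg(v), of (1 − 1/(2·deg(u))), is at least 1/2. -/
/-!
A neighbour `u` of `v` with `deg u ≥ deg v = d` contributes a factor at least `1 - 1/(2d)`, and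
there are at most `d` such neighbours, so the product is at least `(1 - 1/(2d))^d`, which is at
least `1/2` by Bernoulli's inequality.
-/

open Finset

-- These hold at `d = 0` too, where the junk value `1 / 0 = 0` makes the base equal to `1`.
lemma one_sub_inv_two_mul_nonneg (d : ℕ) : 0 ≤ 1 - 1 / (2 * (d : ℝ)) := by
  rcases Nat.eq_zero_or_pos d with rfl | hd
  · simp
  · have : (1 : ℝ) ≤ d := by exact_mod_cast hd
    rw [sub_nonneg, div_le_one (by positivity)]
    linarith

lemma one_sub_inv_two_mul_le_one (d : ℕ) : 1 - 1 / (2 * (d : ℝ)) ≤ 1 := by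
  have : 0 ≤ 1 / (2 * (d : ℝ)) := by positivity
  linarith

lemma one_half_le_one_sub_inv_two_mul_pow (d : ℕ) : (1 : ℝ) / 2 ≤ (1 - 1 / (2 * d)) ^ d := by
  rcases Nat.eq_zero_or_pos d with rfl | hd
  · norm_num
  · have hd' : (0 : ℝ) < d := by exact_mod_cast hd
    calc (1 : ℝ) / 2 = 1 + d * (-(1 / (2 * d))) := by field_simp; ring
      _ ≤ (1 + -(1 / (2 * (d : ℝ)))) ^ d :=
          one_add_mul_le_pow (by linarith [one_sub_inv_two_mul_nonneg d]) d
      _ = (1 - 1 / (2 * d)) ^ d := by rw [← sub_eq_add_neg]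

lemma one_half_le_prod_one_sub_inv_two_mul {ι : Type*} (s : Finset ι) (f : ι → ℕ) {d : ℕ}
    (hcard : #s ≤ d) (hf : ∀ i ∈ s, d ≤ f i) :
    (1 : ℝ) / 2 ≤ ∏ i ∈ s, (1 - 1 / (2 * (f i : ℝ))) := by
  have hfactor : ∀ i ∈ s, 1 - 1 / (2 * (d : ℝ)) ≤ 1 - 1 / (2 * f i) := by
    intro i hi
    have hd : (0 : ℝ) < d := by exact_mod_cast (card_pos.mpr ⟨i, hi⟩).trans_le hcard
    have hdi : (d : ℝ) ≤ f i := by exact_mod_cast hf i hi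
    gcongr
  calc (1 : ℝ) / 2 ≤ (1 - 1 / (2 * d)) ^ d := one_half_le_one_sub_inv_two_mul_pow d
    _ ≤ (1 - 1 / (2 * d)) ^ #s :=
        pow_le_pow_of_le_one (one_sub_inv_two_mul_nonneg d) (one_sub_inv_two_mul_le_one d) hcard
    _ = ∏ _i ∈ s, (1 - 1 / (2 * (d : ℝ))) := (prod_const _).symm
    _ ≤ ∏ i ∈ s, (1 - 1 / (2 * (f i : ℝ))) :=
        prod_le_prod (fun _ _ => one_sub_inv_two_mul_nonneg d) hfactor

/-- In a finite simple graph, for any vertex `v`, the product over neighbors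
`u` of `v` with `deg(u) ≥ deg(v)` of `(1 − 1/(2·deg(u)))` is at least `1/2`. -/
theorem stmt_8 {V : Type*} [Fintype V] (G : SimpleGraph V) [DecidableRel G.Adj] (v : V) :
    (1 : ℝ) / 2 ≤
      ∏ u ∈ (G.neighborFinset v).filter (fun u => G.degree v ≤ G.degree u),
        (1 - (1 : ℝ) / (2 * G.degree u)) := by
  apply one_half_le_prod_one_sub_inv_two_mul _ (fun u => G.degree u) (d := G.degree v)
  · exact (card_filter_le _ _).trans (G.card_neighborFinset_eq_degree v).le
  · exact fun u hu => (mem_filter.mp hu).2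
end
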